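/- Let π : (X,T) → (Y,S) be a factor map between dynamical systems, μ a T-invariant Borel probability measure on X, A = {A_1,…,A_m} a finite Borel partition of X, and C' = {C'_1,…,C'_l} a finite Borel partition of Y. For each 1 ≤ s ≤ l and 1 ≤ j ≤ m set B_{s,j} = π^{−1}(C'_s) ∩ A_j, let C_{s,j} ⊆ B_{s,j} be Borel sets, and let C_{s,0} = π^{−1}(C'_s) ∖ ⋃_{j=1}^m C_{s,j}, so that C = { C_{s,j} : 1 ≤ s ≤ l, 0 ≤ j ≤ m } is a Borel partition of X. If log(m) · Σ_{s=1}^l Σ_{j=1}^m μ(B_{s,j} ∖ C_{s,j}) ≤ 1, then h_μ(T, A) ≤ h_μ(T, C) + 1. -/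

import Mathlib

open Set MeasureTheory Filter Topology
open scoped ENNReal NNReal

noncomputable section

namespace WTPaper

/-- The Bowen dynamical `edist` up to time `N`:
`d_N(x,y) = max_{0 ≤ n < N} d(T^n x, T^n y)`. -/
def dynEDist {X : Type*} [PseudoEMetricSpace X] (T : X → X) (N : ℕ) (x y : X) : ℝ≥0∞ :=
  (Finset.range N).sup fun n => edist (T^[n] x) (T^[n] y)

/-- The diameter of a set with respect to the Bowen metric `d_N`. -/
def dynDiam {X : Type*} [PseudoEMetricSpace X] (T : X → X) (N : ℕ) (U : Set X) : ℝ≥0∞ :=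
  ⨆ x ∈ U, ⨆ y ∈ U, dynEDist T N x y

/-- Birkhoff sum `S_N f = f + f ∘ T + ⋯ + f ∘ T^{N-1}`. -/
def birkhoff {X : Type*} (T : X → X) (f : X → ℝ) (N : ℕ) (x : X) : ℝ :=
  ∑ n ∈ Finset.range N, f (T^[n] x)

section Sequence

variable {X : ℕ → Type*}

/-- The quantity `P^a_{i+1}(Ω, f, N, ε)` of the paper (level index `i` is 0-based, so
`paP T π a f 0` is `P^a_1`, defined on subsets of `X 0`, and level `i+1` is defined from
level `i` through the factor map `π i : X i → X (i+1)` and the exponent `a i`). -/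
def paP [∀ i, MetricSpace (X i)] (T : ∀ i, X i → X i) (π : ∀ i, X i → X (i + 1))
    (a : ℕ → ℝ) (f : X 0 → ℝ) : ∀ i : ℕ, Set (X i) → ℕ → ℝ → ℝ
  | 0 => fun Ω N ε =>
      sInf { s : ℝ | ∃ (n : ℕ) (U : Fin n → Set (X 0)),
        (∀ j, IsOpen (U j)) ∧ (Ω ⊆ ⋃ j, U j) ∧
        (∀ j, dynDiam (T 0) N (U j) < ENNReal.ofReal ε) ∧
        s = ∑ j, Real.exp (sSup (birkhoff (T 0) f N '' U j)) }
  | (i + 1) => fun Ω N ε =>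
      sInf { s : ℝ | ∃ (n : ℕ) (U : Fin n → Set (X (i + 1))),
        (∀ j, IsOpen (U j)) ∧ (Ω ⊆ ⋃ j, U j) ∧
        (∀ j, dynDiam (T (i + 1)) N (U j) < ENNReal.ofReal ε) ∧
        s = ∑ j, (paP T π a f i (π i ⁻¹' U j) N ε) ^ (a i) }

/-- The counting quantity `#^a_{i+1}(Ω, N, ε)` (level index 0-based as in `paP`). -/
def cntP [∀ i, MetricSpace (X i)] (T : ∀ i, X i → X i) (π : ∀ i, X i → X (i + 1))
    (a : ℕ → ℝ) : ∀ i : ℕ, Set (X i) → ℕ → ℝ → ℝ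
  | 0 => fun Ω N ε =>
      sInf { s : ℝ | ∃ (n : ℕ) (U : Fin n → Set (X 0)),
        (∀ j, IsOpen (U j)) ∧ (Ω ⊆ ⋃ j, U j) ∧
        (∀ j, dynDiam (T 0) N (U j) < ENNReal.ofReal ε) ∧
        s = (n : ℝ) }
  | (i + 1) => fun Ω N ε =>
      sInf { s : ℝ | ∃ (n : ℕ) (U : Fin n → Set (X (i + 1))),
        (∀ j, IsOpen (U j)) ∧ (Ω ⊆ ⋃ j, U j) ∧
        (∀ j, dynDiam (T (i + 1)) N (U j) < ENNReal.ofReal ε) ∧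
        s = ∑ j, (cntP T π a i (π i ⁻¹' U j) N ε) ^ (a i) }

/-- The topological pressure of `a`-exponent of a sequence of `r` dynamical systems:
`P^a(f) = lim_{ε → 0} lim_{N → ∞} (1/N) log P^a_r(X_r, f, N, ε)`.
(The limit over `N` of the subadditive sequence is its infimum over `N ≥ 1`, and the
limit as `ε → 0` of the quantity, nondecreasing as `ε` decreases, is its supremum
over `ε > 0`.) -/
def paPressure [∀ i, MetricSpace (X i)] (r : ℕ) (T : ∀ i, X i → X i)
    (π : ∀ i, X i → X (i + 1)) (a : ℕ → ℝ) (f : X 0 → ℝ) : EReal :=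
  ⨆ ε : {e : ℝ // 0 < e}, ⨅ N : {n : ℕ // 0 < n},
    ((((N : ℕ) : ℝ)⁻¹ * Real.log (paP T π a f (r - 1) Set.univ (N : ℕ) (ε : ℝ)) : ℝ) : EReal)

/-- The topological entropy of `a`-exponent of a sequence of `r` dynamical systems:
`h^a(T) = lim_{ε → 0} lim_{N → ∞} (1/N) log #^a_r(X_r, N, ε)`. -/
def cntEntropy [∀ i, MetricSpace (X i)] (r : ℕ) (T : ∀ i, X i → X i)
    (π : ∀ i, X i → X (i + 1)) (a : ℕ → ℝ) : EReal :=
  ⨆ ε : {e : ℝ // 0 < e}, ⨅ N : {n : ℕ // 0 < n},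
    ((((N : ℕ) : ℝ)⁻¹ * Real.log (cntP T π a (r - 1) Set.univ (N : ℕ) (ε : ℝ)) : ℝ) : EReal)

/-- The weight `w_a` associated to the exponents `a` (0-based: `weight a r 0` is the paper's
`w_1 = a_1 ⋯ a_{r-1}`, and `weight a r i` for `1 ≤ i ≤ r-1` is the paper's
`w_{i+1} = (1 - a_i) a_{i+1} ⋯ a_{r-1}`). -/
def weight (a : ℕ → ℝ) (r i : ℕ) : ℝ :=
  (if i = 0 then 1 else 1 - a (i - 1)) * ∏ j ∈ Finset.Ico i (r - 1), a j

/-- `π^(i) = π_{i-1} ∘ ⋯ ∘ π_0 : X 0 → X i` (with `π^(0) = id`). -/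
def picomp (π : ∀ i, X i → X (i + 1)) : ∀ i : ℕ, X 0 → X i
  | 0 => id
  | (i + 1) => π i ∘ picomp π i

end Sequence

section Entropy

variable {Z : Type*}

/-- A finite (Borel) partition. -/
def IsFinPartition [MeasurableSpace Z] (P : Finset (Set Z)) : Prop :=
  (∀ A ∈ P, MeasurableSet A) ∧ (∀ A ∈ P, ∀ B ∈ P, A ≠ B → A ∩ B = ∅) ∧
    ⋃₀ (P : Set (Set Z)) = Set.univ

/-- The refinement `P_N = P ∨ T⁻¹P ∨ ⋯ ∨ T^{-(N-1)}P` of a finite partition. -/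
def refinePart (T : Z → Z) (P : Finset (Set Z)) (N : ℕ) : Finset (Set Z) :=
  letI := Classical.decEq (Set Z)
  Finset.image (fun c : Fin N → ↥P => ⋂ k : Fin N, T^[(k : ℕ)] ⁻¹' ((c k : Set Z)))
    Finset.univ

/-- Shannon entropy `H_μ(P) = -∑_{A ∈ P} μ(A) log μ(A)` of a finite partition. -/
def partEntropy [MeasurableSpace Z] (μ : Measure Z) (P : Finset (Set Z)) : ℝ :=
  ∑ A ∈ P, -((μ A).toReal * Real.log (μ A).toReal)

/-- `h_μ(T, P) = lim_{N → ∞} H_μ(P_N)/N`; for an invariant measure the limit exists by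
subadditivity and equals the infimum over `N ≥ 1`. -/
def entOfPart [MeasurableSpace Z] (μ : Measure Z) (T : Z → Z) (P : Finset (Set Z)) : ℝ :=
  ⨅ N : {n : ℕ // 0 < n}, partEntropy μ (refinePart T P (N : ℕ)) / ((N : ℕ) : ℝ)

/-- The Kolmogorov–Sinai (measure-theoretic) entropy
`h_μ(T) = sup { h_μ(T, P) : P a finite Borel partition }`. -/
def kolSinai [MeasurableSpace Z] (μ : Measure Z) (T : Z → Z) : EReal :=
  ⨆ P : {P : Finset (Set Z) // IsFinPartition P}, ((entOfPart μ T (P : Finset (Set Z)) : ℝ) : EReal)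

end Entropy

section Var

variable {X : ℕ → Type*}

/-- The variational expression
`P^a_var(f) = sup_μ ( ∑_i w_i h_{π^(i-1)_* μ}(T_i) + w_1 ∫ f dμ )`,
the supremum being over all `T 0`-invariant Borel probability measures on `X 0`. -/
def paVar [∀ i, MeasurableSpace (X i)] (r : ℕ) (T : ∀ i, X i → X i)
    (π : ∀ i, X i → X (i + 1)) (a : ℕ → ℝ) (f : X 0 → ℝ) : EReal :=
  ⨆ μ : {μ : Measure (X 0) // IsProbabilityMeasure μ ∧ μ.map (T 0) = μ},
    (∑ i ∈ Finset.range r,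
        ((weight a r i : ℝ) : EReal) *
          kolSinai (Measure.map (picomp π i) (μ : Measure (X 0))) (T i))
      + ((weight a r 0 * ∫ x, f x ∂(μ : Measure (X 0)) : ℝ) : EReal)

/-- The variational expression `sup_μ ∑_i w_i h_{π^(i-1)_* μ}(T_i)` for entropy. -/
def entVar [∀ i, MeasurableSpace (X i)] (r : ℕ) (T : ∀ i, X i → X i)
    (π : ∀ i, X i → X (i + 1)) (a : ℕ → ℝ) : EReal :=
  ⨆ μ : {μ : Measure (X 0) // IsProbabilityMeasure μ ∧ μ.map (T 0) = μ},
    ∑ i ∈ Finset.range r,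
      ((weight a r i : ℝ) : EReal) *
        kolSinai (Measure.map (picomp π i) (μ : Measure (X 0))) (T i)

end Var

/-- The topological space underlying a metric space structure. -/
def mTop {α : Type*} (m : MetricSpace α) : TopologicalSpace α :=
  m.toPseudoMetricSpace.toUniformSpace.toTopologicalSpace

end WTPaper

namespace WTPaper



section IdxAux

variable {Z : Type*} [MeasurableSpace Z] {ι κ τ : Type*} [Fintype ι] [Fintype κ] [Fintype τ]

/-- An indexed finite measurable partition. -/
def IdxPart (f : ι → Set Z) : Prop :=
  (∀ i, MeasurableSet (f i)) ∧ (∀ i j, i ≠ j → f i ∩ f j = ∅) ∧ (⋃ i, f i) = Set.univ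

/-- Entropy of an indexed family. -/
noncomputable def entI (μ : Measure Z) (f : ι → Set Z) : ℝ :=
  ∑ i, Real.negMulLog (μ (f i)).toReal

/-- Conditional entropy of an indexed family given another. -/
noncomputable def centI (μ : Measure Z) (f : ι → Set Z) (g : κ → Set Z) : ℝ :=
  ∑ k, (μ (g k)).toReal *
    ∑ i, Real.negMulLog ((μ (f i ∩ g k)).toReal / (μ (g k)).toReal)

/-- Log-sum inequality, `Real.negMulLog` form, over a finset. -/
lemma sum_negMulLog_div_le {s : Finset τ} (a b : τ → ℝ)
    (ha : ∀ t ∈ s, 0 ≤ a t) (hb : ∀ t ∈ s, 0 ≤ b t)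
    (hab : ∀ t ∈ s, b t = 0 → a t = 0) :
    ∑ t ∈ s, b t * Real.negMulLog (a t / b t)
      ≤ (∑ t ∈ s, b t) * Real.negMulLog ((∑ t ∈ s, a t) / (∑ t ∈ s, b t)) := by
  set A := ∑ t ∈ s, a t with hA
  set B := ∑ t ∈ s, b t with hB
  have hA0 : 0 ≤ A := Finset.sum_nonneg ha
  have hB0 : 0 ≤ B := Finset.sum_nonneg hb
  have key : ∀ (x y : ℝ), 0 ≤ x → 0 ≤ y → (y = 0 → x = 0) →
      y * Real.negMulLog (x / y) = -(x * Real.log (x / y)) := by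
    intro x y hx hy h0
    rcases eq_or_lt_of_le hy with h | h
    · rw [h0 h.symm, ← h]; simp
    · rcases eq_or_lt_of_le hx with hx0 | hx0
      · rw [← hx0]; simp
      · have hy0 : y ≠ 0 := ne_of_gt h
        have hyx : y * (x / y) = x := by field_simp
        rw [Real.negMulLog, neg_mul, mul_neg, ← mul_assoc, hyx]
  have hBA : B = 0 → A = 0 := by
    intro h
    have hb0 : ∀ t ∈ s, b t = 0 := by
      intro t ht
      exact le_antisymm (h ▸ Finset.single_le_sum hb ht) (hb t ht)
    exact Finset.sum_eq_zero fun t ht => hab t ht (hb0 t ht)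
  rw [key A B hA0 hB0 hBA]
  have hrw : ∑ t ∈ s, b t * Real.negMulLog (a t / b t) = ∑ t ∈ s, -(a t * Real.log (a t / b t)) :=
    Finset.sum_congr rfl fun t ht => key _ _ (ha t ht) (hb t ht) (hab t ht)
  rw [hrw]
  rcases eq_or_lt_of_le hB0 with hB1 | hB1
  · have haz : ∀ t ∈ s, a t = 0 := by
      intro t ht
      exact hab t ht (le_antisymm (hB1 ▸ Finset.single_le_sum hb ht) (hb t ht))
    have h1 : ∑ t ∈ s, -(a t * Real.log (a t / b t)) = 0 :=
      Finset.sum_eq_zero fun t ht => by rw [haz t ht]; simp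
    rw [h1, hBA hB1.symm]
    simp
  rcases eq_or_lt_of_le hA0 with hA1 | hA1
  · have haz : ∀ t ∈ s, a t = 0 := by
      intro t ht
      exact le_antisymm (hA1 ▸ Finset.single_le_sum ha ht) (ha t ht)
    have : ∑ t ∈ s, -(a t * Real.log (a t / b t)) = 0 :=
      Finset.sum_eq_zero fun t ht => by rw [haz t ht]; simp
    rw [this, ← hA1]
    simp
  -- main case: A > 0, B > 0
  have step : ∀ t ∈ s, a t * (Real.log (A / B) - Real.log (a t / b t)) ≤ A * b t / B - a t := by
    intro t ht
    rcases eq_or_lt_of_le (ha t ht) with h0 | h0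
    · rw [← h0]
      simp only [zero_mul, zero_sub, neg_zero, sub_zero]
      exact div_nonneg (mul_nonneg hA0 (hb t ht)) hB0
    · have hbt : 0 < b t := by
        rcases eq_or_lt_of_le (hb t ht) with h | h
        · exact absurd (hab t ht h.symm) (ne_of_gt h0)
        · exact h
      have hx : 0 < A * b t / (B * a t) := by positivity
      have hlog : Real.log (A / B) - Real.log (a t / b t)
          = Real.log (A * b t / (B * a t)) := by
        rw [Real.log_div (ne_of_gt hA1) (ne_of_gt hB1),
          Real.log_div (ne_of_gt h0) (ne_of_gt hbt),
          Real.log_div (by positivity) (by positivity),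
          Real.log_mul (ne_of_gt hA1) (ne_of_gt hbt),
          Real.log_mul (ne_of_gt hB1) (ne_of_gt h0)]
        ring
      rw [hlog]
      have := Real.log_le_sub_one_of_pos hx
      have h2 : a t * Real.log (A * b t / (B * a t)) ≤ a t * (A * b t / (B * a t) - 1) :=
        mul_le_mul_of_nonneg_left this (le_of_lt h0)
      refine h2.trans (le_of_eq ?_)
      field_simp
  have hsum : ∑ t ∈ s, a t * (Real.log (A / B) - Real.log (a t / b t)) ≤ 0 := by
    calc ∑ t ∈ s, a t * (Real.log (A / B) - Real.log (a t / b t))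
        ≤ ∑ t ∈ s, (A * b t / B - a t) := Finset.sum_le_sum step
      _ = A * B / B - A := by rw [Finset.sum_sub_distrib, ← Finset.sum_div, ← Finset.mul_sum]
      _ = 0 := by field_simp; ring
  have expand : ∑ t ∈ s, a t * (Real.log (A / B) - Real.log (a t / b t))
      = A * Real.log (A / B) - ∑ t ∈ s, a t * Real.log (a t / b t) := by
    simp only [mul_sub]
    rw [Finset.sum_sub_distrib, ← Finset.sum_mul]
  rw [expand] at hsum
  have : A * Real.log (A / B) ≤ ∑ t ∈ s, a t * Real.log (a t / b t) := by linarith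
  rw [Finset.sum_neg_distrib]
  linarith

/-- Gibbs inequality. -/
lemma gibbs (r q : ι → ℝ) (hr : ∀ i, 0 ≤ r i) (hq : ∀ i, 0 ≤ q i)
    (h0 : ∀ i, q i = 0 → r i = 0) :
    ∑ i, Real.negMulLog (r i) ≤ (∑ i, q i - ∑ i, r i) + ∑ i, -(r i * Real.log (q i)) := by
  have step : ∀ i, Real.negMulLog (r i) ≤ (q i - r i) + -(r i * Real.log (q i)) := by
    intro i
    rcases eq_or_lt_of_le (hr i) with h | h
    · rw [← h]; simp [hq i]
    · have hqi : 0 < q i := by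
        rcases eq_or_lt_of_le (hq i) with h' | h'
        · exact absurd (h0 i h'.symm) (ne_of_gt h)
        · exact h'
      have hx : 0 < q i / r i := by positivity
      have := Real.log_le_sub_one_of_pos hx
      have h2 : r i * Real.log (q i / r i) ≤ r i * (q i / r i - 1) :=
        mul_le_mul_of_nonneg_left this (le_of_lt h)
      rw [Real.log_div (ne_of_gt hqi) (ne_of_gt h)] at h2
      have h3 : r i * (q i / r i - 1) = q i - r i := by field_simp
      rw [h3] at h2
      simp only [Real.negMulLog]
      nlinarith
  calc ∑ i, Real.negMulLog (r i) ≤ ∑ i, ((q i - r i) + -(r i * Real.log (q i))) :=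
        Finset.sum_le_sum fun i _ => step i
    _ = (∑ i, q i - ∑ i, r i) + ∑ i, -(r i * Real.log (q i)) := by
        rw [Finset.sum_add_distrib, Finset.sum_sub_distrib]

/-- Max-entropy bound: entropy of a probability vector is at most `log card`. -/
lemma sum_negMulLog_le_log_card [Nonempty ι] (r : ι → ℝ) (hr : ∀ i, 0 ≤ r i)
    (h1 : ∑ i, r i = 1) :
    ∑ i, Real.negMulLog (r i) ≤ Real.log (Fintype.card ι) := by
  have hcard : (0:ℝ) < Fintype.card ι := by
    exact_mod_cast Fintype.card_pos
  have := gibbs r (fun _ => (Fintype.card ι : ℝ)⁻¹) hr (fun _ => by positivity)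
    (fun i h => absurd h (by positivity))
  simp only [Finset.sum_const, Finset.card_univ, nsmul_eq_mul, h1] at this
  rw [mul_inv_cancel₀ (ne_of_gt hcard)] at this
  calc ∑ i, Real.negMulLog (r i)
      ≤ (1 - 1) + ∑ i, -(r i * Real.log ((Fintype.card ι : ℝ)⁻¹)) := this
    _ = Real.log (Fintype.card ι) := by
        rw [Real.log_inv]
        simp only [mul_neg, neg_neg, sub_self, zero_add, ← Finset.sum_mul, h1, one_mul]


set_option linter.unusedSectionVars false

variable (μ : Measure Z) [IsProbabilityMeasure μ]

lemma toReal_ne_top (s : Set Z) : μ s ≠ ⊤ := measure_ne_top μ s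

/-- Finite additivity of `μ` over an indexed partition, intersected with a set. -/
lemma sum_measure_inter {f : ι → Set Z} (hf : IdxPart f) (s : Set Z)
    (hs : MeasurableSet s) :
    ∑ i, ((μ (f i ∩ s)).toReal) = (μ s).toReal := by
  have hdisj : Pairwise (Function.onFun Disjoint fun i => f i ∩ s) := by
    intro i j hij
    refine Set.disjoint_left.mpr fun x hx hx' => ?_
    have : x ∈ f i ∩ f j := ⟨hx.1, hx'.1⟩
    rw [hf.2.1 i j hij] at this
    exact this
  have hmeas : ∀ i, MeasurableSet (f i ∩ s) := fun i => (hf.1 i).inter hs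
  have : μ s = ∑ i, μ (f i ∩ s) := by
    have hcup : s = ⋃ i, f i ∩ s := by
      rw [← Set.iUnion_inter, hf.2.2, Set.univ_inter]
    conv_lhs => rw [hcup]
    rw [measure_iUnion hdisj hmeas, tsum_fintype]
  rw [this, ENNReal.toReal_sum fun i _ => toReal_ne_top μ _]

lemma IdxPart.joint {f : ι → Set Z} {g : κ → Set Z} (hf : IdxPart f) (hg : IdxPart g) :
    IdxPart (fun p : ι × κ => f p.1 ∩ g p.2) := by
  refine ⟨fun p => (hf.1 p.1).inter (hg.1 p.2), fun p q hpq => ?_, ?_⟩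
  · rcases eq_or_ne p.1 q.1 with h1 | h1
    · have h2 : p.2 ≠ q.2 := fun h2 => hpq (Prod.ext h1 h2)
      have := hg.2.1 p.2 q.2 h2
      ext x; simp only [Set.mem_inter_iff, Set.mem_empty_iff_false, iff_false]
      rintro ⟨⟨-, hx2⟩, -, hx4⟩
      exact absurd (Set.mem_inter hx2 hx4) (by rw [this]; exact Set.notMem_empty x)
    · have := hf.2.1 p.1 q.1 h1
      ext x; simp only [Set.mem_inter_iff, Set.mem_empty_iff_false, iff_false]
      rintro ⟨⟨hx1, -⟩, hx3, -⟩
      exact absurd (Set.mem_inter hx1 hx3) (by rw [this]; exact Set.notMem_empty x)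
  · ext x
    simp only [Set.mem_iUnion, Set.mem_inter_iff, Set.mem_univ, iff_true, Prod.exists]
    have hx1 : x ∈ ⋃ i, f i := by rw [hf.2.2]; trivial
    have hx2 : x ∈ ⋃ k, g k := by rw [hg.2.2]; trivial
    obtain ⟨i, hi⟩ := Set.mem_iUnion.mp hx1
    obtain ⟨k, hk⟩ := Set.mem_iUnion.mp hx2
    exact ⟨i, k, hi, hk⟩

lemma IdxPart.preimage {f : ι → Set Z} (hf : IdxPart f) {T : Z → Z} (hT : Measurable T) :
    IdxPart (fun i => T ⁻¹' f i) := by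
  refine ⟨fun i => hT (hf.1 i), fun i j hij => ?_, ?_⟩
  · rw [← Set.preimage_inter, hf.2.1 i j hij, Set.preimage_empty]
  · rw [← Set.preimage_iUnion, hf.2.2, Set.preimage_univ]

/-- Monotonicity: refining a partition increases entropy. -/
lemma entI_le_entI_joint {f : ι → Set Z} {g : κ → Set Z}
    (hf : ∀ i, MeasurableSet (f i)) (hg : IdxPart g) :
    entI μ f ≤ entI μ (fun p : ι × κ => f p.1 ∩ g p.2) := by
  unfold entI
  rw [Fintype.sum_prod_type]
  refine Finset.sum_le_sum fun i _ => ?_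
  have hsum : (μ (f i)).toReal = ∑ k, (μ (g k ∩ f i)).toReal := by
    rw [sum_measure_inter μ hg (f i) (hf i)]
  have hcomm : ∀ k, f i ∩ g k = g k ∩ f i := fun k => Set.inter_comm _ _
  simp only [hcomm]
  rw [hsum]
  -- superadditivity of Real.negMulLog on nonneg reals
  set x : κ → ℝ := fun k => (μ (g k ∩ f i)).toReal with hx
  have hx0 : ∀ k, 0 ≤ x k := fun k => ENNReal.toReal_nonneg
  have hSx : ∀ k, x k ≤ ∑ k', x k' := fun k =>
    Finset.single_le_sum (fun k' _ => hx0 k') (Finset.mem_univ k)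
  have step : ∀ k, -(x k * Real.log (∑ k', x k')) ≤ Real.negMulLog (x k) := by
    intro k
    rcases eq_or_lt_of_le (hx0 k) with h | h
    · rw [← h]; simp
    · have : Real.log (x k) ≤ Real.log (∑ k', x k') := Real.log_le_log h (hSx k)
      simp only [Real.negMulLog, neg_mul]
      nlinarith
  calc Real.negMulLog (∑ k, x k) = ∑ k, -(x k * Real.log (∑ k', x k')) := by
        rw [Finset.sum_neg_distrib, ← Finset.sum_mul, Real.negMulLog, neg_mul]
    _ ≤ ∑ k, Real.negMulLog (x k) := Finset.sum_le_sum fun k _ => step k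

/-- Chain rule (as an inequality): `H(f ∨ g) ≤ H(g) + H(f | g)`. -/
lemma entI_joint_le {f : ι → Set Z} {g : κ → Set Z}
    (hf : IdxPart f) (hg : ∀ k, MeasurableSet (g k)) :
    entI μ (fun p : ι × κ => f p.1 ∩ g p.2) ≤ entI μ g + centI μ f g := by
  unfold entI centI
  rw [Fintype.sum_prod_type_right, ← Finset.sum_add_distrib]
  refine Finset.sum_le_sum fun k _ => ?_
  set q := (μ (g k)).toReal with hq
  have hq0 : 0 ≤ q := ENNReal.toReal_nonneg
  set p : ι → ℝ := fun i => (μ (f i ∩ g k)).toReal with hp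
  have hp0 : ∀ i, 0 ≤ p i := fun i => ENNReal.toReal_nonneg
  have hpq : ∀ i, p i ≤ q := fun i => by
    apply ENNReal.toReal_mono (toReal_ne_top μ _)
    exact measure_mono Set.inter_subset_right
  have hsum : ∑ i, p i = q := sum_measure_inter μ hf (g k) (hg k)
  show ∑ i, Real.negMulLog (p i) ≤ Real.negMulLog q + q * ∑ i, Real.negMulLog (p i / q)
  rcases eq_or_lt_of_le hq0 with h0 | h0
  · have hpz : ∀ i, p i = 0 := fun i => le_antisymm (h0 ▸ hpq i) (hp0 i)
    have h1 : ∑ i : ι, Real.negMulLog (p i) = 0 :=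
      Finset.sum_eq_zero fun i _ => by rw [hpz i]; simp
    rw [h1, ← h0]
    simp
  · have key : ∀ i, Real.negMulLog (p i) = q * Real.negMulLog (p i / q) + p i * Real.log q⁻¹ := by
      intro i
      rcases eq_or_lt_of_le (hp0 i) with h | h
      · rw [← h]; simp
      · rw [Real.log_inv]
        simp only [Real.negMulLog]
        rw [Real.log_div (ne_of_gt h) (ne_of_gt h0)]
        field_simp
        ring
    refine le_of_eq ?_
    calc ∑ i, Real.negMulLog (p i) = ∑ i, (q * Real.negMulLog (p i / q) + p i * Real.log q⁻¹) :=
          Finset.sum_congr rfl fun i _ => key i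
      _ = q * ∑ i, Real.negMulLog (p i / q) + (∑ i, p i) * Real.log q⁻¹ := by
          rw [Finset.sum_add_distrib, Finset.mul_sum, Finset.sum_mul]
      _ = Real.negMulLog q + q * ∑ i, Real.negMulLog (p i / q) := by
          rw [hsum, Real.log_inv, Real.negMulLog]
          ring


/-- Subadditivity of entropy for a joint probability vector. -/
lemma sum_negMulLog_prod_le (r : ι × κ → ℝ) (hr : ∀ p, 0 ≤ r p) (h1 : ∑ p, r p = 1) :
    ∑ p, Real.negMulLog (r p)
      ≤ ∑ i, Real.negMulLog (∑ k, r (i, k)) + ∑ k, Real.negMulLog (∑ i, r (i, k)) := by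
  set m1 : ι → ℝ := fun i => ∑ k, r (i, k) with hm1
  set m2 : κ → ℝ := fun k => ∑ i, r (i, k) with hm2
  have hm10 : ∀ i, 0 ≤ m1 i := fun i => Finset.sum_nonneg fun k _ => hr _
  have hm20 : ∀ k, 0 ≤ m2 k := fun k => Finset.sum_nonneg fun i _ => hr _
  have hm1z : ∀ i k, m1 i = 0 → r (i, k) = 0 := by
    intro i k h
    have := (Finset.sum_eq_zero_iff_of_nonneg (fun k _ => hr (i, k))).mp h
    exact this k (Finset.mem_univ k)
  have hm2z : ∀ i k, m2 k = 0 → r (i, k) = 0 := by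
    intro i k h
    have := (Finset.sum_eq_zero_iff_of_nonneg (fun i _ => hr (i, k))).mp h
    exact this i (Finset.mem_univ i)
  have hm1sum : ∑ i, m1 i = 1 := by rw [hm1, ← Fintype.sum_prod_type, h1]
  have hm2sum : ∑ k, m2 k = 1 := by rw [hm2, ← Fintype.sum_prod_type_right, h1]
  have := gibbs r (fun p => m1 p.1 * m2 p.2) hr (fun p => mul_nonneg (hm10 _) (hm20 _))
    (fun p h => by
      rcases mul_eq_zero.mp h with h | h
      · exact hm1z p.1 p.2 h
      · exact hm2z p.1 p.2 h)
  have hssum : ∑ p : ι × κ, m1 p.1 * m2 p.2 = 1 := by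
    rw [Fintype.sum_prod_type]
    simp only [← Finset.mul_sum]
    rw [← Finset.sum_mul, hm1sum, hm2sum, one_mul]
  rw [hssum, h1, sub_self, zero_add] at this
  refine this.trans (le_of_eq ?_)
  have split : ∀ p : ι × κ, -(r p * Real.log (m1 p.1 * m2 p.2))
      = -(r p * Real.log (m1 p.1)) + -(r p * Real.log (m2 p.2)) := by
    intro p
    rcases eq_or_ne (m1 p.1) 0 with h | h
    · rcases p with ⟨i, k⟩
      rw [hm1z i k h]
      simp
    · rcases eq_or_ne (m2 p.2) 0 with h' | h'
      · rcases p with ⟨i, k⟩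
        rw [hm2z i k h']
        simp
      · rw [Real.log_mul h h']
        ring
  rw [Finset.sum_congr rfl fun p _ => split p, Finset.sum_add_distrib]
  congr 1
  · rw [Fintype.sum_prod_type]
    refine Finset.sum_congr rfl fun i _ => ?_
    rw [show ∑ k, -(r (i, k) * Real.log (m1 i)) = -((∑ k, r (i, k)) * Real.log (m1 i)) by
      rw [Finset.sum_neg_distrib, ← Finset.sum_mul]]
    rw [Real.negMulLog, neg_mul]
  · rw [Fintype.sum_prod_type_right]
    refine Finset.sum_congr rfl fun k _ => ?_
    rw [show ∑ i, -(r (i, k) * Real.log (m2 k)) = -((∑ i, r (i, k)) * Real.log (m2 k)) by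
      rw [Finset.sum_neg_distrib, ← Finset.sum_mul]]
    rw [Real.negMulLog, neg_mul]

/-- Subadditivity of conditional entropy in the first argument. -/
lemma centI_joint_le {ι' : Type*} [Fintype ι'] {f : ι → Set Z} {f' : ι' → Set Z}
    {g : κ → Set Z} (hf : IdxPart f) (hf' : IdxPart f') (hg : ∀ k, MeasurableSet (g k)) :
    centI μ (fun p : ι × ι' => f p.1 ∩ f' p.2) g ≤ centI μ f g + centI μ f' g := by
  unfold centI
  rw [← Finset.sum_add_distrib]
  refine Finset.sum_le_sum fun k _ => ?_
  set q := (μ (g k)).toReal with hq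
  have hq0 : 0 ≤ q := ENNReal.toReal_nonneg
  rcases eq_or_lt_of_le hq0 with h0 | h0
  · rw [← h0]
    simp
  · rw [← mul_add]
    refine mul_le_mul_of_nonneg_left ?_ hq0
    set r : ι × ι' → ℝ := fun p => (μ (f p.1 ∩ f' p.2 ∩ g k)).toReal / q with hr
    have hr0 : ∀ p, 0 ≤ r p := fun p => div_nonneg ENNReal.toReal_nonneg hq0
    have hr1 : ∑ p, r p = 1 := by
      rw [hr, ← Finset.sum_div]
      rw [sum_measure_inter μ (hf.joint hf') (g k) (hg k)]
      exact div_self (ne_of_gt h0)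
    have hmarg1 : ∀ i, ∑ i', r (i, i') = (μ (f i ∩ g k)).toReal / q := by
      intro i
      rw [← Finset.sum_div]
      congr 1
      have : ∀ i', f i ∩ f' i' ∩ g k = f' i' ∩ (f i ∩ g k) := by
        intro i'; ext x; simp only [Set.mem_inter_iff]; tauto
      rw [Finset.sum_congr rfl fun i' _ => by rw [this i']]
      exact sum_measure_inter μ hf' (f i ∩ g k) ((hf.1 i).inter (hg k))
    have hmarg2 : ∀ i', ∑ i, r (i, i') = (μ (f' i' ∩ g k)).toReal / q := by
      intro i'
      rw [← Finset.sum_div]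
      congr 1
      have : ∀ i, f i ∩ f' i' ∩ g k = f i ∩ (f' i' ∩ g k) := by
        intro i; ext x; simp only [Set.mem_inter_iff]; tauto
      rw [Finset.sum_congr rfl fun i _ => by rw [this i]]
      exact sum_measure_inter μ hf (f' i' ∩ g k) ((hf'.1 i').inter (hg k))
    have := sum_negMulLog_prod_le r hr0 hr1
    have e1 : ∑ i : ι, Real.negMulLog (∑ i', r (i, i'))
        = ∑ i : ι, Real.negMulLog ((μ (f i ∩ g k)).toReal / q) :=
      Finset.sum_congr rfl fun i _ => by rw [hmarg1 i]
    have e2 : ∑ i' : ι', Real.negMulLog (∑ i, r (i, i'))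
        = ∑ i' : ι', Real.negMulLog ((μ (f' i' ∩ g k)).toReal / q) :=
      Finset.sum_congr rfl fun i' _ => by rw [hmarg2 i']
    rw [e1, e2] at this
    exact this

/-- Conditioning on a finer partition decreases conditional entropy. -/
lemma centI_refine_le {f : ι → Set Z} {g : κ → Set Z} {h : τ → Set Z} (p : τ → κ)
    (hf : ∀ i, MeasurableSet (f i)) (hg : ∀ k, MeasurableSet (g k))
    (hgd : ∀ k k', k ≠ k' → g k ∩ g k' = ∅) (hh : IdxPart h)
    (hsub : ∀ t, h t ⊆ g (p t)) :
    centI μ f h ≤ centI μ f g := by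
  classical
  have hL : centI μ f h = ∑ i, ∑ t,
      (μ (h t)).toReal * Real.negMulLog ((μ (f i ∩ h t)).toReal / (μ (h t)).toReal) := by
    unfold centI
    rw [show (∑ t, (μ (h t)).toReal * ∑ i, Real.negMulLog ((μ (f i ∩ h t)).toReal / (μ (h t)).toReal))
        = ∑ t, ∑ i, (μ (h t)).toReal * Real.negMulLog ((μ (f i ∩ h t)).toReal / (μ (h t)).toReal) from
      Finset.sum_congr rfl fun t _ => Finset.mul_sum _ _ _]
    exact Finset.sum_comm
  have hR : centI μ f g = ∑ i, ∑ k,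
      (μ (g k)).toReal * Real.negMulLog ((μ (f i ∩ g k)).toReal / (μ (g k)).toReal) := by
    unfold centI
    rw [show (∑ k, (μ (g k)).toReal * ∑ i, Real.negMulLog ((μ (f i ∩ g k)).toReal / (μ (g k)).toReal))
        = ∑ k, ∑ i, (μ (g k)).toReal * Real.negMulLog ((μ (f i ∩ g k)).toReal / (μ (g k)).toReal) from
      Finset.sum_congr rfl fun k _ => Finset.mul_sum _ _ _]
    exact Finset.sum_comm
  rw [hL, hR]
  refine Finset.sum_le_sum fun i _ => ?_
  -- group τ by fibers of p
  rw [← Finset.sum_fiberwise Finset.univ p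
    (fun t => (μ (h t)).toReal * Real.negMulLog ((μ (f i ∩ h t)).toReal / (μ (h t)).toReal))]
  refine Finset.sum_le_sum fun k _ => ?_
  have hsubB : ∀ t ∈ Finset.univ.filter fun t => p t = k, h t ⊆ g k := by
    intro t ht
    have := (Finset.mem_filter.mp ht).2
    exact this ▸ hsub t
  have hBsum : ∑ t ∈ Finset.univ.filter (fun t => p t = k), (μ (h t)).toReal
      = (μ (g k)).toReal := by
    rw [← sum_measure_inter μ hh (g k) (hg k)]
    rw [Finset.sum_filter]
    refine Finset.sum_congr rfl fun t _ => ?_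
    rcases eq_or_ne (p t) k with hp | hp
    · rw [if_pos hp]
      congr 1
      rw [Set.inter_eq_left.mpr (hp ▸ hsub t)]
    · rw [if_neg hp]
      have : h t ∩ g k = ∅ := by
        apply Set.eq_empty_of_subset_empty
        calc h t ∩ g k ⊆ g (p t) ∩ g k := Set.inter_subset_inter_left _ (hsub t)
          _ = ∅ := hgd _ _ hp
      rw [this]
      simp
  have hAsum : ∑ t ∈ Finset.univ.filter (fun t => p t = k), (μ (f i ∩ h t)).toReal
      = (μ (f i ∩ g k)).toReal := by
    rw [← sum_measure_inter μ hh (f i ∩ g k) ((hf i).inter (hg k))]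
    rw [Finset.sum_filter]
    refine Finset.sum_congr rfl fun t _ => ?_
    rcases eq_or_ne (p t) k with hp | hp
    · rw [if_pos hp]
      have hsub' : h t ⊆ g k := hp ▸ hsub t
      have hst : h t ∩ (f i ∩ g k) = f i ∩ h t := by
        ext x; simp only [Set.mem_inter_iff]
        exact ⟨fun ⟨hx1, hx2, _⟩ => ⟨hx2, hx1⟩, fun ⟨hx1, hx2⟩ => ⟨hx2, hx1, hsub' hx2⟩⟩
      rw [hst]
    · rw [if_neg hp]
      have : h t ∩ (f i ∩ g k) = ∅ := by
        apply Set.eq_empty_of_subset_empty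
        intro x ⟨hx1, _, hx3⟩
        have : x ∈ g (p t) ∩ g k := ⟨hsub t hx1, hx3⟩
        rw [hgd _ _ hp] at this
        exact this
      rw [this]
      simp
  have := sum_negMulLog_div_le (s := Finset.univ.filter fun t => p t = k)
    (fun t => (μ (f i ∩ h t)).toReal) (fun t => (μ (h t)).toReal)
    (fun t _ => ENNReal.toReal_nonneg) (fun t _ => ENNReal.toReal_nonneg)
    (fun t _ hbt => by
      have hz : μ (h t) = 0 := by
        have := toReal_ne_top μ (h t)
        exact (ENNReal.toReal_eq_zero_iff _).mp hbt |>.resolve_right (by simpa using this)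
      have hfz : μ (f i ∩ h t) = 0 :=
        le_antisymm (hz ▸ measure_mono Set.inter_subset_right) zero_le
      show (μ (f i ∩ h t)).toReal = 0
      rw [hfz]; simp)
  rw [hBsum, hAsum] at this
  exact this

/-- Invariance of conditional entropy under a measure-preserving preimage. -/
lemma centI_preimage {T : Z → Z} (hT : Measurable T)
    (hinv : ∀ s : Set Z, MeasurableSet s → μ (T ⁻¹' s) = μ s)
    {f : ι → Set Z} {g : κ → Set Z} (hf : ∀ i, MeasurableSet (f i))
    (hg : ∀ k, MeasurableSet (g k)) :
    centI μ (fun i => T ⁻¹' f i) (fun k => T ⁻¹' g k) = centI μ f g := by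
  unfold centI
  refine Finset.sum_congr rfl fun k _ => ?_
  rw [hinv (g k) (hg k)]
  congr 1
  refine Finset.sum_congr rfl fun i _ => ?_
  rw [← Set.preimage_inter, hinv _ ((hf i).inter (hg k))]

/-- Reindexing invariance of conditional entropy. -/
lemma centI_comp_equiv {ι' : Type*} [Fintype ι'] (e : ι' ≃ ι) (f : ι → Set Z)
    (g : κ → Set Z) : centI μ (fun i => f (e i)) g = centI μ f g := by
  unfold centI
  refine Finset.sum_congr rfl fun k _ => ?_
  congr 1
  exact Equiv.sum_comp e fun i => Real.negMulLog ((μ (f i ∩ g k)).toReal / (μ (g k)).toReal)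


/-- The family of Bowen name-atoms of an indexed partition. -/
def namesF (T : Z → Z) (f : ι → Set Z) (N : ℕ) : (Fin N → ι) → Set Z :=
  fun c => ⋂ k : Fin N, T^[(k : ℕ)] ⁻¹' f (c k)

lemma IdxPart.namesF {f : ι → Set Z} (hf : IdxPart f) {T : Z → Z} (hT : Measurable T)
    (N : ℕ) : IdxPart (namesF T f N) := by
  refine ⟨fun c => MeasurableSet.iInter fun k => (hT.iterate _) (hf.1 _), ?_, ?_⟩
  · intro c c' hcc
    obtain ⟨k, hk⟩ := Function.ne_iff.mp hcc
    apply Set.eq_empty_of_subset_empty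
    intro x ⟨hx1, hx2⟩
    have h1 : x ∈ T^[(k : ℕ)] ⁻¹' f (c k) := Set.mem_iInter.mp hx1 k
    have h2 : x ∈ T^[(k : ℕ)] ⁻¹' f (c' k) := Set.mem_iInter.mp hx2 k
    have : T^[(k : ℕ)] x ∈ f (c k) ∩ f (c' k) := ⟨h1, h2⟩
    rw [hf.2.1 _ _ hk] at this
    exact this
  · ext x
    simp only [Set.mem_iUnion, Set.mem_univ, iff_true]
    have : ∀ k : Fin N, ∃ i, T^[(k : ℕ)] x ∈ f i := by
      intro k
      have : T^[(k : ℕ)] x ∈ ⋃ i, f i := by rw [hf.2.2]; trivial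
      exact Set.mem_iUnion.mp this
    choose c hc using this
    exact ⟨c, Set.mem_iInter.mpr fun k => hc k⟩

lemma namesF_succ_cons {T : Z → Z} {f : ι → Set Z} {N : ℕ} (i : ι) (d : Fin N → ι) :
    namesF T f (N + 1) (Fin.cons i d)
      = f i ∩ namesF T (fun j => T ⁻¹' f j) N d := by
  ext x
  simp only [namesF, Set.mem_iInter, Set.mem_inter_iff, Set.mem_preimage]
  rw [Fin.forall_fin_succ]
  simp only [Fin.cons_zero, Fin.cons_succ, Fin.val_zero, Function.iterate_zero, id_eq,
    Fin.val_succ, Function.iterate_succ_apply', Set.mem_preimage]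

/-- Iterated subadditivity: `H(P_N | Q) ≤ ∑_{k<N} H(T^{-k}P | Q)`. -/
lemma centI_namesF_le {T : Z → Z} (hT : Measurable T) {g : κ → Set Z}
    (hg : ∀ k, MeasurableSet (g k)) :
    ∀ (N : ℕ) (f : ι → Set Z), IdxPart f →
      centI μ (namesF T f N) g
        ≤ ∑ k ∈ Finset.range N, centI μ (fun i => T^[k] ⁻¹' f i) g := by
  intro N
  induction N with
  | zero =>
    intro f hf
    have h0 : ∀ c : Fin 0 → ι, namesF T f 0 c = Set.univ := fun c => by
      simp [namesF]
    have hz : centI μ (namesF T f 0) g = 0 := by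
      unfold centI
      refine Finset.sum_eq_zero fun k _ => ?_
      rcases eq_or_ne (μ (g k)).toReal 0 with h | h
      · rw [h, zero_mul]
      · have h1 : ∀ c : Fin 0 → ι,
            Real.negMulLog ((μ (namesF T f 0 c ∩ g k)).toReal / (μ (g k)).toReal) = 0 := by
          intro c
          rw [h0 c, Set.univ_inter, div_self h]
          simp
        rw [Finset.sum_congr rfl fun c _ => h1 c]
        simp
    rw [hz]
    simp
  | succ N IH =>
    intro f hf
    set e : ι × (Fin N → ι) ≃ (Fin (N + 1) → ι) := Fin.consEquiv (fun _ => ι) with he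
    have hc : ∀ p : ι × (Fin N → ι),
        namesF T f (N + 1) (e p) = f p.1 ∩ namesF T (fun j => T ⁻¹' f j) N p.2 := by
      rintro ⟨i, d⟩
      exact namesF_succ_cons i d
    have hpre : IdxPart fun j => T ⁻¹' f j := hf.preimage hT
    have hnames : IdxPart (namesF T (fun j => T ⁻¹' f j) N) := hpre.namesF hT N
    calc centI μ (namesF T f (N + 1)) g
        = centI μ (fun p : ι × (Fin N → ι) => namesF T f (N + 1) (e p)) g :=
          (centI_comp_equiv μ e (namesF T f (N + 1)) g).symm
      _ = centI μ (fun p : ι × (Fin N → ι) =>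
            f p.1 ∩ namesF T (fun j => T ⁻¹' f j) N p.2) g := by
          rw [show (fun p : ι × (Fin N → ι) => namesF T f (N + 1) (e p))
            = fun p : ι × (Fin N → ι) => f p.1 ∩ namesF T (fun j => T ⁻¹' f j) N p.2
            from funext hc]
      _ ≤ centI μ f g + centI μ (namesF T (fun j => T ⁻¹' f j) N) g :=
          centI_joint_le μ hf hnames hg
      _ ≤ centI μ f g + ∑ k ∈ Finset.range N, centI μ (fun i => T^[k] ⁻¹' (T ⁻¹' f i)) g :=
          add_le_add_right (IH _ hpre) _
      _ = ∑ k ∈ Finset.range (N + 1), centI μ (fun i => T^[k] ⁻¹' f i) g := by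
          rw [Finset.sum_range_succ']
          have hrw : ∀ k, (fun i => T^[k] ⁻¹' (T ⁻¹' f i)) = fun i => T^[k + 1] ⁻¹' f i := by
            intro k
            funext i
            rw [Function.iterate_succ', Set.preimage_comp]
          have h0 : (fun i => T^[0] ⁻¹' f i) = f := by
            funext i
            simp
          rw [h0, Finset.sum_congr rfl fun k (_ : k ∈ Finset.range N) => by rw [hrw k]]
          ring

end IdxAux


section Bridge

variable {Z : Type*} [MeasurableSpace Z] {ι : Type*} [Fintype ι]
variable (μ : Measure Z) [IsProbabilityMeasure μ]

set_option linter.unusedSectionVars false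

lemma partEntropy_nonneg (P : Finset (Set Z)) : 0 ≤ partEntropy μ P := by
  refine Finset.sum_nonneg fun A _ => ?_
  have h1 : (μ A).toReal ≤ 1 := by
    have h := prob_le_one (μ := μ) (s := A)
    calc (μ A).toReal ≤ (1 : ℝ≥0∞).toReal := ENNReal.toReal_mono (by simp) h
      _ = 1 := by simp
  have h2 := Real.negMulLog_nonneg ENNReal.toReal_nonneg h1
  rw [Real.negMulLog, neg_mul] at h2
  exact h2

lemma partEntropy_image (f : ι → Set Z) (hd : ∀ i j, i ≠ j → f i ∩ f j = ∅) :
    partEntropy μ (@Finset.image _ _ (Classical.decEq _) f Finset.univ) = entI μ f := by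
  letI : DecidableEq (Set Z) := Classical.decEq (Set Z)
  unfold partEntropy entI
  have hconv : ∀ A ∈ Finset.image f Finset.univ,
      -((μ A).toReal * Real.log (μ A).toReal) = Real.negMulLog (μ A).toReal := by
    intro A _
    rw [Real.negMulLog, neg_mul]
  rw [Finset.sum_congr rfl hconv]
  refine Finset.sum_image' _ ?_
  intro i _
  have hterm : ∀ j ∈ Finset.univ.filter fun j => f j = f i,
      Real.negMulLog (μ (f j)).toReal = Real.negMulLog (μ (f i)).toReal := by
    intro j hj
    rw [(Finset.mem_filter.mp hj).2]
  rw [Finset.sum_congr rfl hterm, Finset.sum_const]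
  rcases eq_or_ne (Finset.univ.filter fun j => f j = f i) {i} with hc | hc
  · rw [hc]
    simp
  · have hi : i ∈ Finset.univ.filter fun j => f j = f i :=
      Finset.mem_filter.mpr ⟨Finset.mem_univ i, rfl⟩
    have hex : ∃ j ∈ Finset.univ.filter fun j => f j = f i, j ≠ i := by
      by_contra hno
      push_neg at hno
      apply hc
      apply Finset.eq_singleton_iff_unique_mem.mpr
      exact ⟨hi, fun j hj => hno j hj⟩
    obtain ⟨j, hj, hji⟩ := hex
    have hfj : f j = f i := (Finset.mem_filter.mp hj).2
    have hempty : f i = ∅ := by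
      rw [← hd j i hji, hfj, Set.inter_self]
    rw [hempty]
    simp

lemma IdxPart.val_image {f : ι → Set Z} (hf : IdxPart f) :
    IdxPart (fun p : ↥(@Finset.image _ _ (Classical.decEq _) f Finset.univ) => (p : Set Z)) := by
  letI : DecidableEq (Set Z) := Classical.decEq (Set Z)
  refine ⟨?_, ?_, ?_⟩
  · intro p
    obtain ⟨i, _, hi⟩ := Finset.mem_image.mp p.2
    show MeasurableSet (p : Set Z)
    rw [← hi]
    exact hf.1 i
  · intro p q hpq
    have hv : (p : Set Z) ≠ (q : Set Z) := fun h => hpq (Subtype.coe_injective h)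
    obtain ⟨i, _, hi⟩ := Finset.mem_image.mp p.2
    obtain ⟨j, _, hj⟩ := Finset.mem_image.mp q.2
    have hij : i ≠ j := by
      rintro rfl
      exact hv (by rw [← hi, ← hj])
    show ((p : Set Z) ∩ (q : Set Z)) = ∅
    rw [← hi, ← hj]
    exact hf.2.1 i j hij
  · ext x
    simp only [Set.mem_iUnion, Set.mem_univ, iff_true]
    have : x ∈ ⋃ i, f i := by rw [hf.2.2]; trivial
    obtain ⟨i, hi⟩ := Set.mem_iUnion.mp this
    exact ⟨⟨f i, Finset.mem_image_of_mem f (Finset.mem_univ i)⟩, hi⟩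

lemma partEntropy_refinePart {f : ι → Set Z} (hf : IdxPart f) {T : Z → Z}
    (hT : Measurable T) (N : ℕ) :
    partEntropy μ (refinePart T (@Finset.image _ _ (Classical.decEq _) f Finset.univ) N)
      = entI μ (namesF T
          (fun p : ↥(@Finset.image _ _ (Classical.decEq _) f Finset.univ) => (p : Set Z)) N) := by
  have heq : refinePart T (@Finset.image _ _ (Classical.decEq _) f Finset.univ) N
      = @Finset.image _ _ (Classical.decEq _)
          (namesF T (fun p : ↥(@Finset.image _ _ (Classical.decEq _) f Finset.univ)
            => (p : Set Z)) N) Finset.univ := rfl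
  rw [heq]
  exact partEntropy_image μ _ (hf.val_image.namesF hT N).2.1

lemma measure_iterate_preimage {T : Z → Z} (hT : Measurable T) (hinv : μ.map T = μ) :
    ∀ (n : ℕ) (s : Set Z), MeasurableSet s → μ (T^[n] ⁻¹' s) = μ s := by
  intro n
  induction n with
  | zero => intro s _; simp
  | succ n IH =>
    intro s hs
    have h1 : T^[n + 1] ⁻¹' s = T ⁻¹' (T^[n] ⁻¹' s) := by
      rw [Function.iterate_succ, Set.preimage_comp]
    rw [h1]
    have h2 : μ (T ⁻¹' (T^[n] ⁻¹' s)) = μ.map T (T^[n] ⁻¹' s) :=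
      (Measure.map_apply hT ((hT.iterate n) hs)).symm
    rw [h2, hinv]
    exact IH s hs

lemma sum_image_le_sum {α β : Type*} [DecidableEq β] (s : Finset α) (f : α → β) (g : β → ℝ)
    (hg : ∀ b, 0 ≤ g b) : ∑ b ∈ s.image f, g b ≤ ∑ a ∈ s, g (f a) := by
  classical
  induction s using Finset.induction with
  | empty => simp
  | @insert a s ha ih =>
    rw [Finset.image_insert, Finset.sum_insert ha]
    by_cases h : f a ∈ s.image f
    · rw [Finset.insert_eq_self.mpr h]
      exact ih.trans (le_add_of_nonneg_left (hg (f a)))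
    · rw [Finset.sum_insert h]
      exact add_le_add_right ih _

lemma sum_subtype_image_le {α γ : Type*} [Fintype α] (f : α → γ) (g : γ → ℝ)
    (hg : ∀ b, 0 ≤ g b) :
    ∑ q : ↥(@Finset.image _ _ (Classical.decEq _) f Finset.univ), g (q : γ)
      ≤ ∑ a : α, g (f a) := by
  letI : DecidableEq γ := Classical.decEq γ
  rw [Finset.sum_coe_sort (@Finset.image _ _ (Classical.decEq _) f Finset.univ) g]
  exact sum_image_le_sum _ _ _ hg

/-- The key chain of inequalities: `H(A_N) ≤ H(C_N) + N · H(A|C)`. -/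
lemma entI_namesF_chain {κ : Type*} [Fintype κ] {T : Z → Z} (hT : Measurable T)
    (hinv : μ.map T = μ) {fA : ι → Set Z} {fC : κ → Set Z}
    (hA : IdxPart fA) (hC : IdxPart fC) (N : ℕ) :
    entI μ (namesF T fA N) ≤ entI μ (namesF T fC N) + N * centI μ fA fC := by
  have hmiter := measure_iterate_preimage μ hT hinv
  have hAN := hA.namesF hT N
  have hCN := hC.namesF hT N
  have h1 := entI_le_entI_joint μ (f := namesF T fA N) hAN.1 hCN
  have h2 := entI_joint_le μ (f := namesF T fA N) (g := namesF T fC N) hAN (fun c => hCN.1 c)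
  have h3 := centI_namesF_le μ hT (fun c => hCN.1 c) N fA hA
  have h4 : ∀ k ∈ Finset.range N,
      centI μ (fun i => T^[k] ⁻¹' fA i) (namesF T fC N) ≤ centI μ fA fC := by
    intro k hk
    have hkN := Finset.mem_range.mp hk
    have hstep := centI_refine_le μ (f := fun i => T^[k] ⁻¹' fA i)
      (g := fun j => T^[k] ⁻¹' fC j) (h := namesF T fC N)
      (fun c => c ⟨k, hkN⟩)
      (fun i => (hT.iterate k) (hA.1 i)) (fun j => (hT.iterate k) (hC.1 j))
      ((hC.preimage (hT.iterate k)).2.1) hCN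
      (fun c => Set.iInter_subset
        (fun k' : Fin N => T^[(k' : ℕ)] ⁻¹' fC (c k')) ⟨k, hkN⟩)
    have hinvk := centI_preimage μ (hT.iterate k) (fun s hs => hmiter k s hs) hA.1 hC.1
    exact hstep.trans_eq hinvk
  calc entI μ (namesF T fA N)
      ≤ entI μ (namesF T fC N) + centI μ (namesF T fA N) (namesF T fC N) := h1.trans h2
    _ ≤ entI μ (namesF T fC N)
        + ∑ k ∈ Finset.range N, centI μ (fun i => T^[k] ⁻¹' fA i) (namesF T fC N) :=
        add_le_add_right h3 _
    _ ≤ entI μ (namesF T fC N) + ∑ _k ∈ Finset.range N, centI μ fA fC :=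
        add_le_add_right (Finset.sum_le_sum h4) _
    _ = entI μ (namesF T fC N) + N * centI μ fA fC := by
        rw [Finset.sum_const, Finset.card_range, nsmul_eq_mul]

end Bridge

set_option maxHeartbeats 1000000 in
/-- **Lemma 5.2 (compact approximation of partitions)**: with
`B_{s,j} = π⁻¹(C'_s) ∩ A_j`, Borel sets `C_{s,j} ⊆ B_{s,j}` and
`C_{s,0} = π⁻¹(C'_s) ∖ ⋃_j C_{s,j}`, if `log m · ∑_{s,j} μ(B_{s,j} ∖ C_{s,j}) ≤ 1`
then `h_μ(T, A) ≤ h_μ(T, C) + 1`. -/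
theorem entropy_partition_approximation
    (X Y : Type*) [MetricSpace X] [MetricSpace Y] [CompactSpace X] [CompactSpace Y]
    [MeasurableSpace X] [BorelSpace X] [MeasurableSpace Y] [BorelSpace Y]
    (T : X → X) (S : Y → Y) (hT : Continuous T) (hS : Continuous S)
    (π : X → Y) (hπcont : Continuous π) (hπsurj : Function.Surjective π)
    (hπfact : π ∘ T = S ∘ π)
    (μ : Measure X) [IsProbabilityMeasure μ] (hμinv : μ.map T = μ)
    (m : ℕ) (A : Fin m → Set X)
    (hAmeas : ∀ j, MeasurableSet (A j))
    (hAdisj : ∀ j k : Fin m, j ≠ k → A j ∩ A k = ∅)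
    (hAcover : ⋃ j, A j = Set.univ)
    (l : ℕ) (C' : Fin l → Set Y)
    (hC'meas : ∀ s, MeasurableSet (C' s))
    (hC'disj : ∀ s t : Fin l, s ≠ t → C' s ∩ C' t = ∅)
    (hC'cover : ⋃ s, C' s = Set.univ)
    (C : Fin l → Fin (m + 1) → Set X)
    (hCmeas : ∀ s j, MeasurableSet (C s j))
    (hCsub : ∀ (s : Fin l) (j : Fin m), C s j.succ ⊆ π ⁻¹' (C' s) ∩ A j)
    (hCzero : ∀ s : Fin l, C s 0 = π ⁻¹' (C' s) \ ⋃ j : Fin m, C s j.succ)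
    (hsmall : Real.log (m : ℝ) *
        ∑ s : Fin l, ∑ j : Fin m,
          ((μ ((π ⁻¹' (C' s) ∩ A j) \ C s j.succ)).toReal) ≤ 1) :
    entOfPart μ T (@Finset.image _ _ (Classical.decEq _) A Finset.univ)
      ≤ entOfPart μ T
          (@Finset.image _ _ (Classical.decEq _)
            (fun p : Fin l × Fin (m + 1) => C p.1 p.2) Finset.univ) + 1 := by
  have hTm : Measurable T := hT.measurable
  have hAidx : IdxPart A := ⟨hAmeas, hAdisj, hAcover⟩
  have hCpre : ∀ (s : Fin l) (j : Fin (m + 1)), C s j ⊆ π ⁻¹' (C' s) := by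
    intro s j
    refine Fin.cases ?_ ?_ j
    · rw [hCzero s]; exact Set.diff_subset
    · intro i
      exact (hCsub s i).trans Set.inter_subset_left
  have hCdisj_same : ∀ (s : Fin l) (j j' : Fin (m + 1)), j ≠ j' → C s j ∩ C s j' = ∅ := by
    have h0succ : ∀ (s : Fin l) (i : Fin m), C s 0 ∩ C s i.succ = ∅ := by
      intro s i
      apply Set.eq_empty_of_subset_empty
      rintro x ⟨hx0, hxi⟩
      rw [hCzero s] at hx0
      exact absurd (Set.mem_iUnion.mpr ⟨i, hxi⟩) hx0.2
    have hsucc2 : ∀ (s : Fin l) (i i' : Fin m), i ≠ i' → C s i.succ ∩ C s i'.succ = ∅ := by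
      intro s i i' hii
      apply Set.eq_empty_of_subset_empty
      rintro x ⟨hx, hx'⟩
      have h1 : x ∈ A i := (hCsub s i hx).2
      have h2 : x ∈ A i' := (hCsub s i' hx').2
      have h3 := hAdisj i i' hii
      have hmem : x ∈ A i ∩ A i' := ⟨h1, h2⟩
      rw [h3] at hmem
      exact hmem
    intro s j j' hjj
    rcases Fin.eq_zero_or_eq_succ j with rfl | ⟨i, rfl⟩ <;>
      rcases Fin.eq_zero_or_eq_succ j' with rfl | ⟨i', rfl⟩
    · exact absurd rfl hjj
    · exact h0succ s i'
    · rw [Set.inter_comm]; exact h0succ s i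
    · exact hsucc2 s i i' fun h => hjj (by rw [h])
  have hCidx : IdxPart (fun p : Fin l × Fin (m + 1) => C p.1 p.2) := by
    refine ⟨fun p => hCmeas p.1 p.2, ?_, ?_⟩
    · rintro ⟨s, j⟩ ⟨s', j'⟩ hne
      rcases eq_or_ne s s' with rfl | hss
      · exact hCdisj_same s j j' fun h => hne (by rw [h])
      · apply Set.eq_empty_of_subset_empty
        rintro x ⟨hx, hx'⟩
        have h1 : π x ∈ C' s := hCpre s j hx
        have h2 : π x ∈ C' s' := hCpre s' j' hx'
        have h3 := hC'disj s s' hss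
        have hmem : π x ∈ C' s ∩ C' s' := ⟨h1, h2⟩
        rw [h3] at hmem
        exact hmem
    · ext x
      simp only [Set.mem_iUnion, Set.mem_univ, iff_true, Prod.exists]
      have : π x ∈ ⋃ s, C' s := by rw [hC'cover]; trivial
      obtain ⟨s, hs⟩ := Set.mem_iUnion.mp this
      by_cases hx : x ∈ ⋃ j : Fin m, C s j.succ
      · obtain ⟨j, hj⟩ := Set.mem_iUnion.mp hx
        exact ⟨s, j.succ, hj⟩
      · exact ⟨s, 0, by rw [hCzero s]; exact ⟨hs, hx⟩⟩
  have hvA := hAidx.val_image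
  have hvC := hCidx.val_image
  have hXne : Nonempty X := by
    by_contra hempty
    rw [not_nonempty_iff] at hempty
    have h1 : μ Set.univ = 1 := measure_univ
    rw [Set.univ_eq_empty_iff.mpr hempty, measure_empty] at h1
    exact zero_ne_one h1
  have hm : 0 < m := by
    obtain ⟨x⟩ := hXne
    have : x ∈ ⋃ j, A j := by rw [hAcover]; trivial
    obtain ⟨j, _⟩ := Set.mem_iUnion.mp this
    exact j.pos
  have hlogm : 0 ≤ Real.log m := Real.log_nonneg (by exact_mod_cast hm)
  classical
  -- the conditional entropy `H(A | C)` bound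
  have hgoodbound : ∀ q : ↥(@Finset.image _ _ (Classical.decEq _)
      (fun p : Fin l × Fin (m + 1) => C p.1 p.2) Finset.univ),
      (∃ (s : Fin l) (j : Fin m), (q : Set X) = C s j.succ) →
      (μ (q : Set X)).toReal * ∑ p : ↥(@Finset.image _ _ (Classical.decEq _) A Finset.univ),
          Real.negMulLog ((μ ((p : Set X) ∩ (q : Set X))).toReal / (μ (q : Set X)).toReal)
        = 0 := by
    rintro q ⟨s, j, hq⟩
    have hqA : (q : Set X) ⊆ A j := by
      rw [hq]; exact (hCsub s j).trans Set.inter_subset_right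
    have hinner : ∀ p : ↥(@Finset.image _ _ (Classical.decEq _) A Finset.univ),
        Real.negMulLog ((μ ((p : Set X) ∩ (q : Set X))).toReal / (μ (q : Set X)).toReal) = 0 := by
      intro p
      obtain ⟨j', _, hj'⟩ := Finset.mem_image.mp p.2
      rcases eq_or_ne (p : Set X) (A j) with hpa | hpa
      · have hiq : (p : Set X) ∩ (q : Set X) = (q : Set X) :=
          Set.inter_eq_right.mpr (fun x hx => hpa ▸ hqA hx)
        rw [hiq]
        rcases eq_or_ne (μ (q : Set X)).toReal 0 with h | h
        · rw [h, div_zero]; simp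
        · rw [div_self h]; simp
      · have hj'' : j' ≠ j := by
          rintro rfl
          exact hpa (by rw [← hj'])
        have hdisj := hAdisj j' j hj''
        have hzero : (p : Set X) ∩ (q : Set X) = ∅ := by
          apply Set.eq_empty_of_subset_empty
          rintro x ⟨hx1, hx2⟩
          have hmem : x ∈ A j' ∩ A j := ⟨by rw [hj']; exact hx1, hqA hx2⟩
          rw [hdisj] at hmem
          exact hmem
        rw [hzero]
        simp
    rw [Finset.sum_congr rfl fun p _ => hinner p]
    simp
  have hbadbound : ∀ q : ↥(@Finset.image _ _ (Classical.decEq _)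
      (fun p : Fin l × Fin (m + 1) => C p.1 p.2) Finset.univ),
      (μ (q : Set X)).toReal * ∑ p : ↥(@Finset.image _ _ (Classical.decEq _) A Finset.univ),
          Real.negMulLog ((μ ((p : Set X) ∩ (q : Set X))).toReal / (μ (q : Set X)).toReal)
        ≤ (μ (q : Set X)).toReal * Real.log m := by
    intro q
    rcases eq_or_ne (μ (q : Set X)).toReal 0 with h | h
    · rw [h, zero_mul, zero_mul]
    · refine mul_le_mul_of_nonneg_left ?_ ENNReal.toReal_nonneg
      have hqmeas : MeasurableSet (q : Set X) := by
        obtain ⟨⟨s, j⟩, _, hj⟩ := Finset.mem_image.mp q.2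
        show MeasurableSet (q : Set X)
        rw [← hj]
        exact hCmeas s j
      have hsumq := sum_measure_inter μ hvA (q : Set X) hqmeas
      have hr1 : ∑ p : ↥(@Finset.image _ _ (Classical.decEq _) A Finset.univ),
          (μ ((p : Set X) ∩ (q : Set X))).toReal / (μ (q : Set X)).toReal = 1 := by
        rw [← Finset.sum_div]
        rw [show (∑ p : ↥(@Finset.image _ _ (Classical.decEq _) A Finset.univ),
          (μ ((p : Set X) ∩ (q : Set X))).toReal) = (μ (q : Set X)).toReal from hsumq]
        exact div_self h
      have hne : Nonempty ↥(@Finset.image _ _ (Classical.decEq _) A Finset.univ) :=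
        ⟨⟨A ⟨0, hm⟩, Finset.mem_image_of_mem A (Finset.mem_univ _)⟩⟩
      have hmax := sum_negMulLog_le_log_card
        (fun p : ↥(@Finset.image _ _ (Classical.decEq _) A Finset.univ) =>
          (μ ((p : Set X) ∩ (q : Set X))).toReal / (μ (q : Set X)).toReal)
        (fun p => div_nonneg ENNReal.toReal_nonneg ENNReal.toReal_nonneg) hr1
      refine hmax.trans ?_
      have hcard1 : 0 < Fintype.card ↥(@Finset.image _ _ (Classical.decEq _) A Finset.univ) :=
        Fintype.card_pos
      have hcard2 : Fintype.card ↥(@Finset.image _ _ (Classical.decEq _) A Finset.univ) ≤ m := by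
        rw [Fintype.card_coe]
        calc (@Finset.image _ _ (Classical.decEq _) A Finset.univ).card
            ≤ (Finset.univ : Finset (Fin m)).card := Finset.card_image_le
          _ = m := by simp
      exact Real.log_le_log (by exact_mod_cast hcard1) (by exact_mod_cast hcard2)
  have hcent : centI μ
      (fun p : ↥(@Finset.image _ _ (Classical.decEq _) A Finset.univ) => (p : Set X))
      (fun q : ↥(@Finset.image _ _ (Classical.decEq _)
        (fun p : Fin l × Fin (m + 1) => C p.1 p.2) Finset.univ) => (q : Set X)) ≤ 1 := by
    have hG0 : ∀ B : Set X,
        0 ≤ (if ∃ (s : Fin l) (j : Fin m), B = C s j.succ then 0 else (μ B).toReal) := by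
      intro B
      by_cases hB : ∃ (s : Fin l) (j : Fin m), B = C s j.succ
      · rw [if_pos hB]
      · rw [if_neg hB]
        exact ENNReal.toReal_nonneg
    have hstep1 : centI μ
        (fun p : ↥(@Finset.image _ _ (Classical.decEq _) A Finset.univ) => (p : Set X))
        (fun q : ↥(@Finset.image _ _ (Classical.decEq _)
          (fun p : Fin l × Fin (m + 1) => C p.1 p.2) Finset.univ) => (q : Set X))
        ≤ ∑ q : ↥(@Finset.image _ _ (Classical.decEq _)
            (fun p : Fin l × Fin (m + 1) => C p.1 p.2) Finset.univ),
            (if ∃ (s : Fin l) (j : Fin m), (q : Set X) = C s j.succ then 0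
              else (μ (q : Set X)).toReal) * Real.log m := by
      unfold centI
      refine Finset.sum_le_sum fun q _ => ?_
      show (μ (q : Set X)).toReal * ∑ p : ↥(@Finset.image _ _ (Classical.decEq _) A Finset.univ),
          Real.negMulLog ((μ ((p : Set X) ∩ (q : Set X))).toReal / (μ (q : Set X)).toReal) ≤ _
      by_cases hq : ∃ (s : Fin l) (j : Fin m), (q : Set X) = C s j.succ
      · rw [hgoodbound q hq, if_pos hq, zero_mul]
      · rw [if_neg hq]
        exact hbadbound q
    have hstep2 : (∑ q : ↥(@Finset.image _ _ (Classical.decEq _)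
            (fun p : Fin l × Fin (m + 1) => C p.1 p.2) Finset.univ),
            (if ∃ (s : Fin l) (j : Fin m), (q : Set X) = C s j.succ then 0
              else (μ (q : Set X)).toReal))
        ≤ ∑ s : Fin l, (μ (C s 0)).toReal := by
      calc (∑ q : ↥(@Finset.image _ _ (Classical.decEq _)
              (fun p : Fin l × Fin (m + 1) => C p.1 p.2) Finset.univ),
              (if ∃ (s : Fin l) (j : Fin m), (q : Set X) = C s j.succ then 0
                else (μ (q : Set X)).toReal))
          ≤ ∑ p : Fin l × Fin (m + 1),
              (if ∃ (s : Fin l) (j : Fin m), C p.1 p.2 = C s j.succ then 0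
                else (μ (C p.1 p.2)).toReal) :=
            sum_subtype_image_le (fun p : Fin l × Fin (m + 1) => C p.1 p.2)
              (fun B => if ∃ (s : Fin l) (j : Fin m), B = C s j.succ then 0
                else (μ B).toReal) hG0
        _ = ∑ s : Fin l, ∑ j : Fin (m + 1),
              (if ∃ (s' : Fin l) (j' : Fin m), C s j = C s' j'.succ then 0
                else (μ (C s j)).toReal) := by rw [Fintype.sum_prod_type]
        _ ≤ ∑ s : Fin l, (μ (C s 0)).toReal := by
            refine Finset.sum_le_sum fun s _ => ?_
            rw [Fin.sum_univ_succ]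
            have hzero : ∀ i : Fin m,
                (if ∃ (s' : Fin l) (j' : Fin m), C s i.succ = C s' j'.succ then 0
                  else (μ (C s i.succ)).toReal) = 0 := fun i => if_pos ⟨s, i, rfl⟩
            rw [Finset.sum_congr rfl fun i _ => hzero i, Finset.sum_const, smul_zero, add_zero]
            by_cases h0 : ∃ (s' : Fin l) (j' : Fin m), C s 0 = C s' j'.succ
            · rw [if_pos h0]
              exact ENNReal.toReal_nonneg
            · rw [if_neg h0]
    have hstep4 : ∀ s : Fin l, (μ (C s 0)).toReal
        ≤ ∑ j : Fin m, (μ ((π ⁻¹' (C' s) ∩ A j) \ C s j.succ)).toReal := by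
      intro s
      have hsub : C s 0 ⊆ ⋃ j : Fin m, ((π ⁻¹' (C' s) ∩ A j) \ C s j.succ) := by
        intro x hx
        rw [hCzero s] at hx
        have : x ∈ ⋃ j, A j := by rw [hAcover]; trivial
        obtain ⟨j, hj⟩ := Set.mem_iUnion.mp this
        exact Set.mem_iUnion.mpr
          ⟨j, ⟨⟨hx.1, hj⟩, fun hc => hx.2 (Set.mem_iUnion.mpr ⟨j, hc⟩)⟩⟩
      have hsumtop : (∑ j : Fin m, μ ((π ⁻¹' (C' s) ∩ A j) \ C s j.succ)) ≠ ⊤ :=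
        ENNReal.sum_ne_top.mpr fun j _ => measure_ne_top μ _
      calc (μ (C s 0)).toReal
          ≤ (μ (⋃ j : Fin m, ((π ⁻¹' (C' s) ∩ A j) \ C s j.succ))).toReal :=
            ENNReal.toReal_mono (measure_ne_top μ _) (measure_mono hsub)
        _ ≤ (∑ j : Fin m, μ ((π ⁻¹' (C' s) ∩ A j) \ C s j.succ)).toReal :=
            ENNReal.toReal_mono hsumtop
              (measure_iUnion_fintype_le μ fun j : Fin m => (π ⁻¹' (C' s) ∩ A j) \ C s j.succ)
        _ = ∑ j : Fin m, (μ ((π ⁻¹' (C' s) ∩ A j) \ C s j.succ)).toReal :=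
            ENNReal.toReal_sum fun j _ => measure_ne_top μ _
    refine le_trans hstep1 ?_
    rw [← Finset.sum_mul]
    have h5 : (∑ q : ↥(@Finset.image _ _ (Classical.decEq _)
          (fun p : Fin l × Fin (m + 1) => C p.1 p.2) Finset.univ),
          (if ∃ (s : Fin l) (j : Fin m), (q : Set X) = C s j.succ then 0
            else (μ (q : Set X)).toReal)) * Real.log m
        ≤ (∑ s : Fin l, (μ (C s 0)).toReal) * Real.log m :=
      mul_le_mul_of_nonneg_right hstep2 hlogm
    have h6 : (∑ s : Fin l, (μ (C s 0)).toReal) * Real.log m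
        ≤ (∑ s : Fin l, ∑ j : Fin m,
            (μ ((π ⁻¹' (C' s) ∩ A j) \ C s j.succ)).toReal) * Real.log m :=
      mul_le_mul_of_nonneg_right (Finset.sum_le_sum fun s _ => hstep4 s) hlogm
    have h7 : (∑ s : Fin l, ∑ j : Fin m,
          (μ ((π ⁻¹' (C' s) ∩ A j) \ C s j.succ)).toReal) * Real.log m
        = Real.log m * ∑ s : Fin l, ∑ j : Fin m,
            (μ ((π ⁻¹' (C' s) ∩ A j) \ C s j.succ)).toReal := mul_comm _ _
    linarith [hsmall]
  -- per-`N` inequality and passage to the infimum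
  have hbrA : ∀ N : ℕ, partEntropy μ
      (refinePart T (@Finset.image _ _ (Classical.decEq _) A Finset.univ) N)
      = entI μ (namesF T
        (fun p : ↥(@Finset.image _ _ (Classical.decEq _) A Finset.univ) => (p : Set X)) N) :=
    fun N => partEntropy_refinePart μ hAidx hTm N
  have hbrC : ∀ N : ℕ, partEntropy μ
      (refinePart T (@Finset.image _ _ (Classical.decEq _)
        (fun p : Fin l × Fin (m + 1) => C p.1 p.2) Finset.univ) N)
      = entI μ (namesF T
        (fun q : ↥(@Finset.image _ _ (Classical.decEq _)
          (fun p : Fin l × Fin (m + 1) => C p.1 p.2) Finset.univ) => (q : Set X)) N) :=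
    fun N => partEntropy_refinePart μ hCidx hTm N
  have hkey : ∀ N : {n : ℕ // 0 < n},
      partEntropy μ (refinePart T (@Finset.image _ _ (Classical.decEq _) A Finset.univ)
          (N : ℕ)) / ((N : ℕ) : ℝ)
        ≤ partEntropy μ (refinePart T (@Finset.image _ _ (Classical.decEq _)
            (fun p : Fin l × Fin (m + 1) => C p.1 p.2) Finset.univ) (N : ℕ)) / ((N : ℕ) : ℝ)
          + 1 := by
    intro N
    have hNpos : (0 : ℝ) < ((N : ℕ) : ℝ) := by exact_mod_cast N.2
    have hchain := entI_namesF_chain μ hTm hμinv hvA hvC (N : ℕ)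
    have hc1 : (((N : ℕ) : ℝ)) * centI μ
        (fun p : ↥(@Finset.image _ _ (Classical.decEq _) A Finset.univ) => (p : Set X))
        (fun q : ↥(@Finset.image _ _ (Classical.decEq _)
          (fun p : Fin l × Fin (m + 1) => C p.1 p.2) Finset.univ) => (q : Set X))
        ≤ ((N : ℕ) : ℝ) := by
      calc _ ≤ (((N : ℕ) : ℝ)) * 1 := mul_le_mul_of_nonneg_left hcent (le_of_lt hNpos)
        _ = _ := mul_one _
    rw [hbrA, hbrC]
    have hup : entI μ (namesF T
        (fun p : ↥(@Finset.image _ _ (Classical.decEq _) A Finset.univ) => (p : Set X))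
        (N : ℕ))
        ≤ entI μ (namesF T
          (fun q : ↥(@Finset.image _ _ (Classical.decEq _)
            (fun p : Fin l × Fin (m + 1) => C p.1 p.2) Finset.univ) => (q : Set X))
          (N : ℕ)) + ((N : ℕ) : ℝ) := by
      refine hchain.trans ?_
      exact add_le_add_right hc1 _
    have hdiv := (div_le_div_iff_of_pos_right hNpos).mpr hup
    refine hdiv.trans (le_of_eq ?_)
    rw [add_div, div_self (ne_of_gt hNpos)]
  have hbdd : BddBelow (Set.range fun N : {n : ℕ // 0 < n} =>
      partEntropy μ (refinePart T (@Finset.image _ _ (Classical.decEq _) A Finset.univ)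
        (N : ℕ)) / ((N : ℕ) : ℝ)) := by
    refine ⟨0, fun y hy => ?_⟩
    obtain ⟨N, rfl⟩ := hy
    exact div_nonneg (partEntropy_nonneg μ _) (by positivity)
  have hne : Nonempty {n : ℕ // 0 < n} := ⟨⟨1, Nat.one_pos⟩⟩
  have hfinal : ∀ N : {n : ℕ // 0 < n},
      entOfPart μ T (@Finset.image _ _ (Classical.decEq _) A Finset.univ) - 1
        ≤ partEntropy μ (refinePart T (@Finset.image _ _ (Classical.decEq _)
            (fun p : Fin l × Fin (m + 1) => C p.1 p.2) Finset.univ) (N : ℕ))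
            / ((N : ℕ) : ℝ) := by
    intro N
    have h1 : entOfPart μ T (@Finset.image _ _ (Classical.decEq _) A Finset.univ)
        ≤ partEntropy μ (refinePart T (@Finset.image _ _ (Classical.decEq _) A Finset.univ)
            (N : ℕ)) / ((N : ℕ) : ℝ) := ciInf_le hbdd N
    have h2 := hkey N
    linarith
  have hlast : entOfPart μ T (@Finset.image _ _ (Classical.decEq _) A Finset.univ) - 1
      ≤ entOfPart μ T (@Finset.image _ _ (Classical.decEq _)
          (fun p : Fin l × Fin (m + 1) => C p.1 p.2) Finset.univ) :=
    le_ciInf hfinal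
  linarith


end WTPaper
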